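/- arXiv:2412.09200 — 3 statements merged into one kernel-verified Lean document; each statement's English description precedes it below -/
import Mathlib

section
/- Let μ be a finite measure on a measurable space X with μ(X) > 0 and let φ : X → ℝ be measurable and bounded. Then for every λ > 0, the Gibbs average (∫ φ(p) e^{−λφ(p)} dμ(p)) / (∫ e^{−λφ(p)} dμ(p)) is greater than or equal to the μ-essential infimum φ* of φ, and it tends to φ* as λ → ∞. -/
/-!
Writing `m` for the essential infimum, the weights `exp (-λ φ)` are positive and `m ≤ φ` almost
everywhere, so the Gibbs average, a weighted mean of `φ`, is at least `m`. For the limit, fix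
`m < a < b`. The set `{φ < a}` has positive measure, so by Markov's inequality the normalising
integral is at least `exp (-λ a) μ {φ < a}`, while the part of the numerator where `φ > b` is at most
`exp (-λ b) ∫ (φ - b)⁺`. Hence the Gibbs average is at most `b + K exp (-λ (b - a))` with
`K = ∫ (φ - b)⁺ / μ {φ < a}`, which is below any `c > m` for large `λ` once `b < c`.
-/

open Real MeasureTheory Filter

section

variable {X : Type*} [MeasurableSpace X] {μ : Measure X} {φ : X → ℝ} {lam : ℝ}

noncomputable def gibbsAverage (μ : Measure X) (φ : X → ℝ) (lam : ℝ) : ℝ :=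
  (∫ p, φ p * exp (-lam * φ p) ∂μ) / ∫ p, exp (-lam * φ p) ∂μ

theorem essInf_mul_integral_le_integral_mul {w : X → ℝ}
    (hφ : IsBoundedUnder (· ≥ ·) (ae μ) φ) (hw : 0 ≤ᵐ[μ] w) (hw_int : Integrable w μ)
    (hφw_int : Integrable (fun x => φ x * w x) μ) :
    essInf φ μ * ∫ x, w x ∂μ ≤ ∫ x, φ x * w x ∂μ := by
  rw [← integral_const_mul]
  refine integral_mono_ae (hw_int.const_mul _) hφw_int ?_
  filter_upwards [ae_essInf_le hφ, hw] with x hφx hwx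
  exact mul_le_mul_of_nonneg_right hφx hwx

theorem essInf_le_gibbsAverage [NeZero μ] (hφ : IsBoundedUnder (· ≥ ·) (ae μ) φ)
    (hE : Integrable (fun x => exp (-lam * φ x)) μ)
    (hφE : Integrable (fun x => φ x * exp (-lam * φ x)) μ) :
    essInf φ μ ≤ gibbsAverage μ φ lam :=
  (le_div_iff₀ (integral_exp_pos hE)).2 <|
    essInf_mul_integral_le_integral_mul hφ (ae_of_all _ fun _ => (exp_pos _).le) hE hφE

theorem measure_lt_ne_zero_of_essInf_lt {a : ℝ} (hφ : IsCoboundedUnder (· ≥ ·) (ae μ) φ)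
    (ha : essInf φ μ < a) : μ {x | φ x < a} ≠ 0 := by
  intro h
  refine ha.not_ge (le_essInf_of_ae_le a ?_ hφ)
  rw [EventuallyLE, ae_iff]
  simpa only [not_le] using h

theorem mul_exp_neg_mul_le (hlam : 0 ≤ lam) (t b : ℝ) :
    t * exp (-lam * t) ≤ b * exp (-lam * t) + max (t - b) 0 * exp (-lam * b) := by
  rcases le_or_gt t b with htb | hbt
  · rw [max_eq_right (sub_nonpos.2 htb), zero_mul, add_zero]
    exact mul_le_mul_of_nonneg_right htb (exp_pos _).le
  · have hexp : exp (-lam * t) ≤ exp (-lam * b) := exp_le_exp.2 (by nlinarith)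
    rw [max_eq_left (sub_nonneg.2 hbt.le)]
    nlinarith [mul_le_mul_of_nonneg_left hexp (sub_nonneg.2 hbt.le)]

section FiniteMeasure

variable [IsFiniteMeasure μ]

theorem integrable_exp_neg_mul_of_abs_le {C : ℝ} (hφm : AEStronglyMeasurable φ μ)
    (hφb : ∀ᵐ x ∂μ, |φ x| ≤ C) (lam : ℝ) : Integrable (fun x => exp (-lam * φ x)) μ := by
  refine .of_bound (continuous_exp.comp_aestronglyMeasurable (hφm.const_mul _)) (exp (|lam| * C))
    (hφb.mono fun x hx => ?_)
  rw [norm_of_nonneg (exp_pos _).le, exp_le_exp]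
  calc -lam * φ x ≤ |-lam * φ x| := le_abs_self _
    _ = |lam| * |φ x| := by rw [abs_mul, abs_neg]
    _ ≤ |lam| * C := mul_le_mul_of_nonneg_left hx (abs_nonneg _)

theorem integrable_mul_exp_neg_mul_of_abs_le {C : ℝ} (hφm : AEStronglyMeasurable φ μ)
    (hφb : ∀ᵐ x ∂μ, |φ x| ≤ C) (lam : ℝ) :
    Integrable (fun x => φ x * exp (-lam * φ x)) μ :=
  (integrable_exp_neg_mul_of_abs_le hφm hφb lam).bdd_mul hφm hφb

theorem exp_neg_mul_mul_measureReal_le_integral (hlam : 0 ≤ lam) (a : ℝ)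
    (hE : Integrable (fun x => exp (-lam * φ x)) μ) :
    exp (-lam * a) * μ.real {x | φ x < a} ≤ ∫ x, exp (-lam * φ x) ∂μ := by
  refine le_trans ?_ (mul_meas_ge_le_integral_of_nonneg (ae_of_all _ fun _ => (exp_pos _).le)
    hE (exp (-lam * a)))
  have hsub : {x | φ x < a} ⊆ {x | exp (-lam * a) ≤ exp (-lam * φ x)} := fun x (hx : φ x < a) =>
    exp_le_exp.2 (by nlinarith)
  exact mul_le_mul_of_nonneg_left (measureReal_mono hsub (measure_ne_top _ _)) (exp_pos _).le

theorem integral_mul_exp_neg_mul_le (hlam : 0 ≤ lam) (b : ℝ) (hφ : Integrable φ μ)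
    (hE : Integrable (fun x => exp (-lam * φ x)) μ)
    (hφE : Integrable (fun x => φ x * exp (-lam * φ x)) μ) :
    ∫ x, φ x * exp (-lam * φ x) ∂μ ≤
      b * ∫ x, exp (-lam * φ x) ∂μ + exp (-lam * b) * ∫ x, max (φ x - b) 0 ∂μ := by
  have hpos : Integrable (fun x => max (φ x - b) 0) μ :=
    (hφ.sub (integrable_const b)).pos_part
  rw [← integral_const_mul, ← integral_const_mul, ← integral_add (hE.const_mul b)
    (hpos.const_mul _)]
  refine integral_mono hφE ((hE.const_mul b).add (hpos.const_mul _)) fun x => ?_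
  simpa only [mul_comm (exp (-lam * b))] using mul_exp_neg_mul_le hlam (φ x) b

theorem gibbsAverage_le (hlam : 0 ≤ lam) {a b : ℝ} (hφ : Integrable φ μ)
    (hE : Integrable (fun x => exp (-lam * φ x)) μ)
    (hφE : Integrable (fun x => φ x * exp (-lam * φ x)) μ)
    (ha : 0 < μ.real {x | φ x < a}) :
    gibbsAverage μ φ lam ≤
      b + ((∫ x, max (φ x - b) 0 ∂μ) / μ.real {x | φ x < a}) * exp (-lam * (b - a)) := by
  set Z := ∫ x, exp (-lam * φ x) ∂μ
  set P := ∫ x, max (φ x - b) 0 ∂μ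
  have hZ_ge : exp (-lam * a) * μ.real {x | φ x < a} ≤ Z :=
    exp_neg_mul_mul_measureReal_le_integral hlam a hE
  have hZ_pos : 0 < Z := (mul_pos (exp_pos _) ha).trans_le hZ_ge
  calc gibbsAverage μ φ lam ≤ (b * Z + exp (-lam * b) * P) / Z :=
        div_le_div_of_nonneg_right (integral_mul_exp_neg_mul_le hlam b hφ hE hφE) hZ_pos.le
    _ = b + exp (-lam * b) * P / Z := by field_simp
    _ ≤ b + exp (-lam * b) * P / (exp (-lam * a) * μ.real {x | φ x < a}) := by
        gcongr
    _ = b + P / μ.real {x | φ x < a} * exp (-lam * (b - a)) := by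
        rw [show -lam * b = -lam * (b - a) + -lam * a by ring, exp_add]
        field_simp

theorem tendsto_gibbsAverage_essInf [NeZero μ] (hφ : IsBoundedUnder (· ≥ ·) (ae μ) φ)
    (hφ' : IsCoboundedUnder (· ≥ ·) (ae μ) φ)
    (hE : ∀ lam, Integrable (fun x => exp (-lam * φ x)) μ)
    (hφE : ∀ lam, Integrable (fun x => φ x * exp (-lam * φ x)) μ) :
    Tendsto (gibbsAverage μ φ) atTop (nhds (essInf φ μ)) := by
  refine tendsto_order.2 ⟨fun c hc => Eventually.of_forall fun lam =>
    hc.trans_le (essInf_le_gibbsAverage hφ (hE lam) (hφE lam)), fun c hc => ?_⟩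
  obtain ⟨b, hmb, hbc⟩ := exists_between hc
  obtain ⟨a, hma, hab⟩ := exists_between hmb
  have ha : 0 < μ.real {x | φ x < a} :=
    ENNReal.toReal_pos (measure_lt_ne_zero_of_essInf_lt hφ' hma) (measure_ne_top _ _)
  set K := (∫ x, max (φ x - b) 0 ∂μ) / μ.real {x | φ x < a}
  have hdecay : Tendsto (fun lam => b + K * exp (-lam * (b - a))) atTop (nhds (b + K * 0)) :=
    ((tendsto_exp_atBot.comp
      (tendsto_neg_atTop_atBot.atBot_mul_const (sub_pos.2 hab))).const_mul K).const_add b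
  rw [mul_zero, add_zero] at hdecay
  filter_upwards [hdecay.eventually_lt_const hbc, eventually_ge_atTop 0] with lam hlt hlam
  have hφ_int : Integrable φ μ := by simpa using hφE 0
  exact (gibbsAverage_le hlam hφ_int (hE lam) (hφE lam) ha).trans_lt hlt

end FiniteMeasure

end

/-- For a finite measure μ with μ(X) > 0 and measurable bounded φ,
the Gibbs average (∫ φ e^{−λφ} dμ) / (∫ e^{−λφ} dμ) is ≥ the μ-essential infimum φ*
of φ for every λ > 0, and tends to φ* as λ → ∞. -/
theorem gibbs_average_ge_and_tendsto_essInf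
    {X : Type*} [MeasurableSpace X] (μ : Measure X) [IsFiniteMeasure μ]
    (hμ : 0 < μ Set.univ)
    (φ : X → ℝ) (hφm : Measurable φ) (Cφ : ℝ) (hφb : ∀ x, |φ x| ≤ Cφ) :
    (∀ lam : ℝ, 0 < lam →
      essInf φ μ ≤
        (∫ p, φ p * Real.exp (-lam * φ p) ∂μ) /
          (∫ p, Real.exp (-lam * φ p) ∂μ)) ∧
    Tendsto (fun lam : ℝ =>
        (∫ p, φ p * Real.exp (-lam * φ p) ∂μ) /
          (∫ p, Real.exp (-lam * φ p) ∂μ))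
      atTop (nhds (essInf φ μ)) := by
  have : NeZero μ := ⟨Measure.measure_univ_pos.1 hμ⟩
  have hφ : ∀ᵐ x ∂μ, |φ x| ≤ Cφ := ae_of_all μ hφb
  have hbdd_below : IsBoundedUnder (· ≥ ·) (ae μ) φ :=
    isBoundedUnder_of_eventually_ge (hφ.mono fun _ => neg_le_of_abs_le)
  have hbdd_above : IsBoundedUnder (· ≤ ·) (ae μ) φ :=
    isBoundedUnder_of_eventually_le (hφ.mono fun _ => le_of_abs_le)
  have hE := integrable_exp_neg_mul_of_abs_le hφm.aestronglyMeasurable hφ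
  have hφE := integrable_mul_exp_neg_mul_of_abs_le hφm.aestronglyMeasurable hφ
  exact ⟨fun lam _ => essInf_le_gibbsAverage hbdd_below (hE lam) (hφE lam),
    tendsto_gibbsAverage_essInf hbdd_below hbdd_above.isCoboundedUnder_ge hE hφE⟩
end

section
/- Let c, K > 0 be real numbers, let d ≥ 1 be a natural number, and let A, B : ℝ → ℝ be functions such that, as λ → ∞, A(λ) = c + K/λ + O(1/λ²) and B(λ) = c − (d/2)·(log λ)/λ + O(1/λ). Define the weights α(λ) = d·log λ / (2K + d·log λ) and β(λ) = 2K / (2K + d·log λ). Then α(λ)·A(λ) + β(λ)·B(λ) − c = O(1/(λ·log λ)) as λ → ∞; in particular the combined estimator has asymptotically smaller error than each of A and B. -/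
/-!
With `D = 2K + d log λ`, the weights satisfy `α + β = 1` and `α · K/λ = β · (d/2) log λ/λ`
(both equal `dK log λ / (λ D)`), so the leading error terms of `A` and `B` cancel exactly and
`α A + β B - c = α (A - c - K/λ) + β (B - c + (d/2) log λ/λ)`.
Since `α = O(1)` and `β = O(1/log λ)`, the two remainders are `O(1/λ²) ⊆ O(1/(λ log λ))`
and `O(1/log λ) · O(1/λ)`.
-/

open Real Filter Asymptotics

lemma blend_sub_eq {α β a b c p q : ℝ} (hsum : α + β = 1) (hbal : α * p = β * q) :
    α * a + β * b - c = α * (a - (c + p)) + β * (b - (c - q)) := by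
  linear_combination c * hsum + hbal

lemma log_weight_blend_sub_eq {K d L x a b c : ℝ} (hD : 2 * K + d * L ≠ 0) :
    d * L / (2 * K + d * L) * a + 2 * K / (2 * K + d * L) * b - c =
      d * L / (2 * K + d * L) * (a - (c + K / x)) +
        2 * K / (2 * K + d * L) * (b - (c - d / 2 * L / x)) :=
  blend_sub_eq (by field_simp; ring) (by field_simp)

lemma isBigO_log_weight_one {a b : ℝ} (ha : 0 < a) (hb : 0 ≤ b) :
    (fun x : ℝ => b * log x / (a + b * log x)) =O[atTop] fun _ => (1 : ℝ) := by
  refine IsBigO.of_bound 1 ?_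
  filter_upwards [eventually_gt_atTop 1] with x hx
  have hbL : 0 ≤ b * log x := mul_nonneg hb (log_nonneg hx.le)
  rw [norm_one, mul_one, norm_of_nonneg (by positivity), div_le_one (by positivity)]
  linarith

lemma isBigO_const_weight_inv_log {a b : ℝ} (ha : 0 ≤ a) (hb : 0 < b) :
    (fun x : ℝ => a / (a + b * log x)) =O[atTop] fun x => 1 / log x := by
  refine IsBigO.of_bound (a / b) ?_
  filter_upwards [eventually_gt_atTop 1] with x hx
  have hL : 0 < log x := log_pos hx
  rw [norm_of_nonneg (by positivity), norm_of_nonneg (by positivity), div_mul_div_comm,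
    mul_one]
  exact div_le_div_of_nonneg_left ha (by positivity) (by nlinarith)

lemma isBigO_one_div_sq_one_div_mul_log :
    (fun x : ℝ => 1 / x ^ 2) =O[atTop] fun x => 1 / (x * log x) := by
  refine IsBigO.of_bound 1 ?_
  filter_upwards [eventually_gt_atTop 1] with x hx
  have hL : 0 < log x := log_pos hx
  have hLx : log x ≤ x := (log_le_sub_one_of_pos (by linarith)).trans (by linarith)
  rw [norm_of_nonneg (by positivity), norm_of_nonneg (by positivity), one_mul, sq]
  gcongr

theorem blended_estimator_error_general
    (c K : ℝ) (hK : 0 < K) (d : ℕ) (hd : 1 ≤ d) (A B : ℝ → ℝ)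
    (hA : (fun lam : ℝ => A lam - (c + K / lam)) =O[atTop] fun lam : ℝ => 1 / lam ^ 2)
    (hB : (fun lam : ℝ => B lam - (c - (d / 2 : ℝ) * Real.log lam / lam)) =O[atTop]
      fun lam : ℝ => 1 / lam) :
    (fun lam : ℝ =>
        (d * Real.log lam / (2 * K + d * Real.log lam)) * A lam +
          (2 * K / (2 * K + d * Real.log lam)) * B lam - c) =O[atTop]
      fun lam : ℝ => 1 / (lam * Real.log lam) := by
  have hd' : (0 : ℝ) < d := by exact_mod_cast hd
  have hαA := ((isBigO_log_weight_one (by positivity : 0 < 2 * K) hd'.le).mul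
    (hA.trans isBigO_one_div_sq_one_div_mul_log)).congr_right fun x => one_mul _
  have hβB := ((isBigO_const_weight_inv_log (by positivity : 0 ≤ 2 * K) hd').mul hB).congr_right
    fun x => by rw [one_div_mul_one_div, mul_comm]
  refine (hαA.add hβB).congr' ?_ EventuallyEq.rfl
  filter_upwards [eventually_gt_atTop 1] with x hx
  have hD : 2 * K + d * log x ≠ 0 := by have := log_pos hx; positivity
  exact (log_weight_blend_sub_eq hD).symm

/-- If A(λ) = c + K/λ + O(1/λ²) and B(λ) = c − (d/2)·(log λ)/λ + O(1/λ)
as λ → ∞, then with weights α(λ) = d·log λ/(2K + d·log λ) and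
β(λ) = 2K/(2K + d·log λ), the blend satisfies
α(λ)·A(λ) + β(λ)·B(λ) − c = O(1/(λ·log λ)) as λ → ∞. -/
theorem blended_estimator_error
    (c K : ℝ) (hc : 0 < c) (hK : 0 < K) (d : ℕ) (hd : 1 ≤ d) (A B : ℝ → ℝ)
    (hA : (fun lam : ℝ => A lam - (c + K / lam)) =O[atTop] fun lam : ℝ => 1 / lam ^ 2)
    (hB : (fun lam : ℝ => B lam - (c - (d / 2 : ℝ) * Real.log lam / lam)) =O[atTop]
      fun lam : ℝ => 1 / lam) :
    (fun lam : ℝ =>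
        (d * Real.log lam / (2 * K + d * Real.log lam)) * A lam +
          (2 * K / (2 * K + d * Real.log lam)) * B lam - c) =O[atTop]
      fun lam : ℝ => 1 / (lam * Real.log lam) :=
  blended_estimator_error_general c K hK d hd A B hA hB
end

section
/- Let v : (0,∞) → ℝ be twice differentiable with v(λ) > 0 for all λ > 0, and define u : (0,∞) → ℝ by u(s) = −s·log v(1/s). Then for every s > 0, writing λ = 1/s, the second-order Taylor extrapolation u(s) − s·u′(s) + (s²/2)·u″(s) equals −v′(λ)/v(λ) − (λ/2)·[ v″(λ)/v(λ) − (v′(λ)/v(λ))² ]. -/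
/-!
Write `u(s) = s · g(1/s)` with `g = -log v`. Differentiating twice, the `g(1/s)` terms cancel in
`u'(s) = g(1/s) - g'(1/s)/s` and `u''(s) = g''(1/s)/s³`, so the extrapolation collapses to
`g'(λ) + (λ/2) g''(λ)`; it remains to insert the logarithmic derivatives of `v`.
-/

open Real Filter Topology

section PerspectiveTransform

variable {g : ℝ → ℝ} {s : ℝ}

theorem hasDerivAt_mul_comp_inv (hs : s ≠ 0) (hg : DifferentiableAt ℝ g s⁻¹) :
    HasDerivAt (fun t => t * g t⁻¹) (g s⁻¹ - s⁻¹ * deriv g s⁻¹) s := by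
  have h : HasDerivAt (fun t => t * g t⁻¹) _ s :=
    (hasDerivAt_id s).mul (hg.hasDerivAt.comp s (hasDerivAt_inv hs))
  convert h using 1
  simp only [id]
  field_simp
  ring

theorem deriv_mul_comp_inv_eventuallyEq (hs : s ≠ 0)
    (hg : ∀ᶠ y in 𝓝 s⁻¹, DifferentiableAt ℝ g y) :
    deriv (fun t => t * g t⁻¹) =ᶠ[𝓝 s] fun t => g t⁻¹ - t⁻¹ * deriv g t⁻¹ := by
  filter_upwards [(continuousAt_inv₀ hs).eventually hg, eventually_ne_nhds hs] with t hgt ht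
  exact (hasDerivAt_mul_comp_inv ht hgt).deriv

theorem deriv_deriv_mul_comp_inv (hs : s ≠ 0)
    (hg : ∀ᶠ y in 𝓝 s⁻¹, DifferentiableAt ℝ g y) (hg' : DifferentiableAt ℝ (deriv g) s⁻¹) :
    deriv (deriv fun t => t * g t⁻¹) s = s⁻¹ ^ 3 * deriv (deriv g) s⁻¹ := by
  have hinv := hasDerivAt_inv hs
  have h : HasDerivAt (fun t => g t⁻¹ - t⁻¹ * deriv g t⁻¹) _ s :=
    (hg.self_of_nhds.hasDerivAt.comp s hinv).sub (hinv.mul (hg'.hasDerivAt.comp s hinv))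
  rw [(deriv_mul_comp_inv_eventuallyEq hs hg).deriv_eq, h.deriv]
  field_simp
  ring

theorem extrapolation_mul_comp_inv (hs : s ≠ 0)
    (hg : ∀ᶠ y in 𝓝 s⁻¹, DifferentiableAt ℝ g y) (hg' : DifferentiableAt ℝ (deriv g) s⁻¹) :
    s * g s⁻¹ - s * deriv (fun t => t * g t⁻¹) s
        + s ^ 2 / 2 * deriv (deriv fun t => t * g t⁻¹) s =
      deriv g s⁻¹ + s⁻¹ / 2 * deriv (deriv g) s⁻¹ := by
  rw [(hasDerivAt_mul_comp_inv hs hg.self_of_nhds).deriv, deriv_deriv_mul_comp_inv hs hg hg']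
  field_simp
  ring

end PerspectiveTransform

section NegLog

variable {v : ℝ → ℝ} {a : ℝ}

theorem deriv_neg_log_eventuallyEq (hv : ∀ᶠ x in 𝓝 a, DifferentiableAt ℝ v x ∧ v x ≠ 0) :
    deriv (fun x => -log (v x)) =ᶠ[𝓝 a] fun x => -(deriv v x / v x) := by
  filter_upwards [hv] with x hx
  exact ((hx.1.hasDerivAt.log hx.2).neg).deriv

theorem deriv_deriv_neg_log (hv : ∀ᶠ x in 𝓝 a, DifferentiableAt ℝ v x ∧ v x ≠ 0)
    (hv' : DifferentiableAt ℝ (deriv v) a) :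
    deriv (deriv fun x => -log (v x)) a =
      -(deriv (deriv v) a / v a - (deriv v a / v a) ^ 2) := by
  obtain ⟨hva, hva0⟩ := hv.self_of_nhds
  have h : HasDerivAt (fun x => -(deriv v x / v x)) _ a :=
    (hv'.hasDerivAt.div hva.hasDerivAt hva0).neg
  rw [(deriv_neg_log_eventuallyEq hv).deriv_eq, h.deriv]
  field_simp

theorem differentiableAt_deriv_neg_log
    (hv : ∀ᶠ x in 𝓝 a, DifferentiableAt ℝ v x ∧ v x ≠ 0) (hv' : DifferentiableAt ℝ (deriv v) a) :
    DifferentiableAt ℝ (deriv fun x => -log (v x)) a :=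
  ((hv'.div hv.self_of_nhds.1 hv.self_of_nhds.2).neg).congr_of_eventuallyEq
    (deriv_neg_log_eventuallyEq hv)

end NegLog

/-- For v : (0,∞) → ℝ twice differentiable and positive, and
u(s) = −s·log v(1/s), the second-order Taylor extrapolation
u(s) − s·u′(s) + (s²/2)·u″(s) equals, with λ = 1/s,
−v′(λ)/v(λ) − (λ/2)·[v″(λ)/v(λ) − (v′(λ)/v(λ))²]. -/
theorem second_order_taylor_extrapolation_eq
    (v : ℝ → ℝ) (hvd : ∀ lam : ℝ, 0 < lam → DifferentiableAt ℝ v lam)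
    (hvd2 : ∀ lam : ℝ, 0 < lam → DifferentiableAt ℝ (deriv v) lam)
    (hvpos : ∀ lam : ℝ, 0 < lam → 0 < v lam)
    (u : ℝ → ℝ) (hu : ∀ s : ℝ, 0 < s → u s = -s * Real.log (v (1 / s)))
    (s : ℝ) (hs : 0 < s) :
    u s - s * deriv u s + s ^ 2 / 2 * deriv (deriv u) s =
      -deriv v (1 / s) / v (1 / s) -
        (1 / s) / 2 *
          (deriv (deriv v) (1 / s) / v (1 / s) -
            (deriv v (1 / s) / v (1 / s)) ^ 2) := by
  have hsinv : 0 < s⁻¹ := inv_pos.mpr hs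
  have hv : ∀ᶠ x in 𝓝 s⁻¹, DifferentiableAt ℝ v x ∧ v x ≠ 0 :=
    eventually_of_mem (Ioi_mem_nhds hsinv) fun x hx => ⟨hvd x hx, (hvpos x hx).ne'⟩
  have hg : ∀ᶠ x in 𝓝 s⁻¹, DifferentiableAt ℝ (fun x => -log (v x)) x :=
    hv.mono fun x hx => (hx.1.log hx.2).neg
  have hg' := differentiableAt_deriv_neg_log hv (hvd2 _ hsinv)
  have hu_eq : u =ᶠ[𝓝 s] fun t => t * -log (v t⁻¹) :=
    eventually_of_mem (Ioi_mem_nhds hs) fun t ht => by rw [hu t ht, one_div]; ring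
  rw [hu_eq.eq_of_nhds, hu_eq.deriv_eq, hu_eq.deriv.deriv_eq,
    extrapolation_mul_comp_inv hs.ne' hg hg', (deriv_neg_log_eventuallyEq hv).eq_of_nhds,
    deriv_deriv_neg_log hv (hvd2 _ hsinv), one_div]
  ring
end
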